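/- arXiv:2111.02170 — 2 statements merged into one kernel-verified Lean document; each statement's English description precedes it below -/
import Mathlib

section
/- For a simplicial complex K, the binary relation on vertices given by 'u and v are exchangeable' (i.e., there exists an automorphism of K swapping u and v and fixing all other vertices) is an equivalence relation on the set of vertices of K. -/
variable {V : Type*}

def IsComplex (F : Set (Finset V)) : Prop :=
  (∀ s ∈ F, s.Nonempty) ∧ ∀ s ∈ F, ∀ t ⊆ s, t.Nonempty → t ∈ F

def IsAuto [DecidableEq V] (F : Set (Finset V)) (φ : Equiv.Perm V) : Prop :=
  ∀ s : Finset V, s ∈ F ↔ s.image φ ∈ F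

def IsExchange [DecidableEq V] (F : Set (Finset V)) (u v : V) (φ : Equiv.Perm V) : Prop :=
  IsAuto F φ ∧ φ u = v ∧ φ v = u ∧ ∀ w : V, w ≠ u → w ≠ v → φ w = w

def Exchangeable [DecidableEq V] (F : Set (Finset V)) (u v : V) : Prop :=
  ∃ φ : Equiv.Perm V, IsExchange F u v φ

def vertices (F : Set (Finset V)) : Set V := {v | ({v} : Finset V) ∈ F}

def quotFaces (F : Set (Finset V)) (G : Subgroup (Equiv.Perm V)) : Set (Finset (Set V)) :=
  {S | ∃ s ∈ F, (↑S : Set (Set V)) = (fun v => MulAction.orbit (↥G) v) '' ↑s}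

def ActsByExch [DecidableEq V] (F : Set (Finset V)) (G : Subgroup (Equiv.Perm V)) : Prop :=
  ∃ M : Set (Equiv.Perm V), G = Subgroup.closure M ∧
    ∀ φ ∈ M, ∃ u v : V, u ≠ v ∧ IsExchange F u v φ

def fullSubFaces (F : Set (Finset V)) (W : Set V) : Set (Finset V) :=
  {s ∈ F | ↑s ⊆ W}

lemma isAuto_one [DecidableEq V] (F : Set (Finset V)) : IsAuto F (1 : Equiv.Perm V) := by
  intro s
  simp [Finset.image_id]

lemma isAuto_mul [DecidableEq V] {F : Set (Finset V)} {φ ψ : Equiv.Perm V}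
    (hφ : IsAuto F φ) (hψ : IsAuto F ψ) : IsAuto F (φ * ψ) := by
  intro s
  rw [hψ s, hφ (s.image ψ), Finset.image_image]
  rfl

/-- For a simplicial complex `F`, the relation "`u` and `v` are exchangeable" (there is
an automorphism of `F` swapping `u` and `v` and fixing all other vertices) is an
equivalence relation on the set of vertices of `F`. -/
theorem exchangeable_equivalence [DecidableEq V] (F : Set (Finset V)) (hF : IsComplex F) :
    Equivalence (fun u v : {x : V // x ∈ vertices F} => Exchangeable F u.1 v.1) := by
  constructor
  · intro u
    exact ⟨1, isAuto_one F, rfl, rfl, fun _ _ _ => rfl⟩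
  · rintro u v ⟨φ, hA, h1, h2, h3⟩
    exact ⟨φ, hA, h2, h1, fun w hw1 hw2 => h3 w hw2 hw1⟩
  · rintro ⟨u, hu⟩ ⟨v, hv⟩ ⟨w, hw⟩ ⟨φ, hφA, hφ1, hφ2, hφ3⟩ ⟨ψ, hψA, hψ1, hψ2, hψ3⟩
    by_cases huv : u = v
    · subst huv; exact ⟨ψ, hψA, hψ1, hψ2, hψ3⟩
    by_cases hvw : v = w
    · subst hvw; exact ⟨φ, hφA, hφ1, hφ2, hφ3⟩
    by_cases huw : u = w
    · subst huw
      exact ⟨1, isAuto_one F, rfl, rfl, fun _ _ _ => rfl⟩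
    refine ⟨φ * ψ * φ, isAuto_mul (isAuto_mul hφA hψA) hφA, ?_, ?_, ?_⟩
    · show φ (ψ (φ u)) = w
      rw [hφ1, hψ1, hφ3 w (Ne.symm huw) (Ne.symm hvw)]
    · show φ (ψ (φ w)) = u
      rw [hφ3 w (Ne.symm huw) (Ne.symm hvw), hψ2, hφ2]
    · intro x hxu hxw
      show φ (ψ (φ x)) = x
      by_cases hxv : x = v
      · subst hxv
        rw [hφ2, hψ3 u huv huw, hφ1]
      · rw [hφ3 x hxu hxv, hψ3 x hxv hxw, hφ3 x hxu hxv]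
end

section
/- Let G be a group acting on a simplicial complex K by exchangeable vertices, and let u be a vertex of K. If v and w both lie in the orbit G·u, then the transposition (v w) belongs to G; in particular, v and w are exchangeable in K. -/
variable {V : Type*}

/-!
Each generator of `G` is an exchange automorphism, i.e. a transposition that is an automorphism
of `F`. Hence `G` is a subgroup of `Aut F` generated by transpositions, and in such a group a
transposition `(v w)` belongs to the group exactly when `v` and `w` lie in a common orbit
(`swap_mem_closure_isSwap`). The exchange automorphism of `v` and `w` is `(v w)` itself.
-/

open Equiv

section

variable [DecidableEq V]

def autGroup (F : Set (Finset V)) : Subgroup (Perm V) where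
  carrier := {φ | IsAuto F φ}
  one_mem' s := by simp
  mul_mem' {φ ψ} hφ hψ s := by
    rw [hψ s, hφ (s.image ψ), Finset.image_image]
    rfl
  inv_mem' {φ} hφ s := by
    rw [hφ (s.image ⇑φ⁻¹), Finset.image_image, Perm.coe_inv, Equiv.self_comp_symm,
      Finset.image_id]

variable {F : Set (Finset V)}

lemma IsExchange.eq_swap {u v : V} {φ : Perm V} (h : IsExchange F u v φ) : φ = swap u v := by
  obtain ⟨-, hu, hv, hfix⟩ := h
  ext x
  rcases eq_or_ne x u with rfl | hxu
  · simp [hu]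
  rcases eq_or_ne x v with rfl | hxv
  · simp [hv]
  · rw [hfix x hxu hxv, swap_apply_of_ne_of_ne hxu hxv]

lemma exchangeable_of_swap_mem_autGroup {v w : V} (h : swap v w ∈ autGroup F) :
    Exchangeable F v w :=
  ⟨swap v w, h, swap_apply_left v w, swap_apply_right v w,
    fun _ hv hw => swap_apply_of_ne_of_ne hv hw⟩

lemma ActsByExch.le_autGroup {G : Subgroup (Perm V)} (hG : ActsByExch F G) : G ≤ autGroup F := by
  obtain ⟨M, rfl, hM⟩ := hG
  rw [Subgroup.closure_le]
  intro φ hφ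
  obtain ⟨_, _, -, hex⟩ := hM φ hφ
  exact hex.1

lemma ActsByExch.swap_mem_iff {G : Subgroup (Perm V)} (hG : ActsByExch F G) {x y : V} :
    swap x y ∈ G ↔ x ∈ MulAction.orbit G y := by
  obtain ⟨M, rfl, hM⟩ := hG
  refine swap_mem_closure_isSwap fun φ hφ => ?_
  obtain ⟨u, v, huv, hex⟩ := hM φ hφ
  exact ⟨u, v, huv, hex.eq_swap⟩

end

theorem transposition_of_same_orbit_general [DecidableEq V] (F : Set (Finset V))
    (G : Subgroup (Equiv.Perm V)) (hG : ActsByExch F G) (u v w : V)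
    (hv : v ∈ MulAction.orbit (↥G) u) (hw : w ∈ MulAction.orbit (↥G) u) :
    Equiv.swap v w ∈ G ∧ Exchangeable F v w := by
  have hvw : v ∈ MulAction.orbit G w := MulAction.orbit_eq_iff.mpr hw ▸ hv
  have hswap : swap v w ∈ G := hG.swap_mem_iff.mpr hvw
  exact ⟨hswap, exchangeable_of_swap_mem_autGroup (hG.le_autGroup hswap)⟩

/-- If `G` acts on the simplicial complex `F` by exchangeable vertices and `v`, `w` lie
in the same vertex orbit `G·u`, then the transposition `(v w)` belongs to `G`; in
particular `v` and `w` are exchangeable in `F`. -/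
theorem transposition_of_same_orbit [DecidableEq V] (F : Set (Finset V)) (hF : IsComplex F)
    (G : Subgroup (Equiv.Perm V)) (hG : ActsByExch F G) (u v w : V)
    (hu : u ∈ vertices F)
    (hv : v ∈ MulAction.orbit (↥G) u) (hw : w ∈ MulAction.orbit (↥G) u) :
    Equiv.swap v w ∈ G ∧ Exchangeable F v w :=
  transposition_of_same_orbit_general F G hG u v w hv hw
end
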